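/- arXiv:quant-ph/9909063 — 2 statements merged into one kernel-verified Lean document; each statement's English description precedes it below -/
import Mathlib

section
/- Suppose Ω(s) is the limit of the Volterra series Ω(s) = Σ_{i≥0} Ω_i(s) with Ω_0 = 1, Ω_{i+1}(s) = ∫_0^s K(t) Ω_i(t) dt, where K(s) vanishes outside [0,1] and is bounded. Set Q(s) = 1 − Ω(s) and f = sup_s ‖Q(s)‖. Then for each i, sup_s ‖Ω_{i+2}(s)‖ ≤ 2 f (sup_s ‖K(s)‖ + 1) · max( sup_s ‖Ω_i(s)‖, sup_s ‖Ω_{i+1}(s)‖ ). -/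
open MeasureTheory ContinuousLinearMap

lemma myint_zero {E : Type*} [NormedAddCommGroup E] [NormedSpace ℝ E] {g : ℝ → E} {a b : ℝ}
    (h : ∀ t ∈ Set.Ioo (min a b) (max a b), g t = 0) : (∫ t in a..b, g t) = 0 := by
  have h1 : ∀ᵐ t : ℝ, t ≠ max a b := by
    rw [MeasureTheory.ae_iff]
    have : {t : ℝ | ¬ t ≠ max a b} = {max a b} := by ext t; simp
    rw [this]
    exact measure_singleton _
  have h2 : (∫ t in a..b, g t) = ∫ t in a..b, (0:E) := by
    apply _root_.intervalIntegral.integral_congr_ae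
    filter_upwards [h1] with t ht hmem
    rw [Set.uIoc, Set.mem_Ioc] at hmem
    exact h t ⟨by simpa using hmem.1, lt_of_le_of_ne (by simpa using hmem.2) ht⟩
  simpa using h2

set_option maxHeartbeats 1000000 in
set_option synthInstance.maxHeartbeats 1000000 in
/-- If `Ω(s) = Σ_i Ω_i(s)` is the (unitary) limit of the Volterra series for a bounded
`K` supported in `[0,1]`, `Q(s) = 1 − Ω(s)` with `‖Q(s)‖ ≤ f`, and `A`, `B` bound
`‖Ω_i‖`, `‖Ω_{i+1}‖` uniformly in `s`, then
`‖Ω_{i+2}(s)‖ ≤ 2 f (sup‖K‖ + 1) · max A B`. -/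
theorem stmt6 {H : Type*} [NormedAddCommGroup H] [InnerProductSpace ℂ H] [CompleteSpace H]
    (K : ℝ → H →L[ℂ] H) (hKcont : Continuous K)
    (hKsupp : Function.support K ⊆ Set.Icc 0 1)
    (M : ℝ) (hM : ∀ s, ‖K s‖ ≤ M)
    (Ωseq : ℕ → ℝ → H →L[ℂ] H)
    (hΩ0 : ∀ s, Ωseq 0 s = 1)
    (hΩsucc : ∀ i, ∀ s, Ωseq (i + 1) s = ∫ t in (0:ℝ)..s, K t * Ωseq i t)
    (Ω : ℝ → H →L[ℂ] H)
    (hΩ : ∀ s, HasSum (fun i => Ωseq i s) (Ω s))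
    (hΩunit : ∀ s, Ω s * adjoint (Ω s) = 1 ∧ adjoint (Ω s) * Ω s = 1)
    (f : ℝ) (hf : ∀ s, ‖1 - Ω s‖ ≤ f)
    (i : ℕ) (A B : ℝ)
    (hA : ∀ s, ‖Ωseq i s‖ ≤ A) (hB : ∀ s, ‖Ωseq (i + 1) s‖ ≤ B) :
    ∀ s, ‖Ωseq (i + 2) s‖ ≤ 2 * f * (M + 1) * max A B := by
  have hM0 : 0 ≤ M := le_trans (norm_nonneg _) (hM 0)
  have hf0 : 0 ≤ f := le_trans (norm_nonneg _) (hf 0)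
  have hA0 : 0 ≤ A := le_trans (norm_nonneg _) (hA 0)
  have hB0 : 0 ≤ B := le_trans (norm_nonneg _) (hB 0)
  have hKzero : ∀ t : ℝ, t < 0 ∨ 1 < t → K t = 0 := by
    intro t ht
    by_contra hne
    have h := hKsupp (Function.mem_support.2 hne)
    rw [Set.mem_Icc] at h
    rcases ht with h'|h' <;> linarith [h.1, h.2]
  -- continuity of each Ωseq j
  have hcont : ∀ j, Continuous (Ωseq j) := by
    intro j
    induction j with
    | zero =>
      have : Ωseq 0 = fun _ => (1 : H →L[ℂ] H) := funext hΩ0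
      rw [this]; exact continuous_const
    | succ j ih =>
      have : Ωseq (j+1) = fun s => ∫ t in (0:ℝ)..s, K t * Ωseq j t := funext (hΩsucc j)
      rw [this]
      exact _root_.intervalIntegral.continuous_primitive
        (fun a b => (hKcont.mul ih).intervalIntegrable a b) 0
  -- vanishing for nonpositive s
  have hzero : ∀ j (s : ℝ), s ≤ 0 → Ωseq (j+1) s = 0 := by
    intro j s hs
    rw [hΩsucc]
    apply myint_zero
    intro t ht
    have ht2 : t < 0 := lt_of_lt_of_le ht.2 (by simp [hs])
    rw [hKzero t (Or.inl ht2), zero_mul]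
  -- constancy for s ≥ 1
  have hconst1 : ∀ j (s : ℝ), 1 ≤ s → Ωseq (j+1) s = Ωseq (j+1) 1 := by
    intro j s hs
    rw [hΩsucc, hΩsucc]
    have hsplit := _root_.intervalIntegral.integral_add_adjacent_intervals (μ := volume)
      ((hKcont.mul (hcont j)).intervalIntegrable 0 1)
      ((hKcont.mul (hcont j)).intervalIntegrable 1 s)
    have hz : (∫ t in (1:ℝ)..s, K t * Ωseq j t) = 0 := by
      apply myint_zero
      intro t ht
      have h1t : (1:ℝ) < t := lt_of_le_of_lt (by simp [hs]) ht.1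
      rw [hKzero t (Or.inr h1t), zero_mul]
    simp only [Pi.mul_apply] at hsplit
    rw [← hsplit, hz, add_zero]
  -- factorial bound on [0,1]
  have hfac : ∀ j, ∀ s : ℝ, 0 ≤ s → s ≤ 1 → ‖Ωseq j s‖ ≤ M ^ j * s ^ j / j.factorial := by
    intro j
    induction j with
    | zero =>
      intro s h0 h1
      simpa [hΩ0, ContinuousLinearMap.one_def] using ContinuousLinearMap.norm_id_le
    | succ j ih =>
      intro s h0 h1
      rw [hΩsucc]
      have hb : ∀ᵐ t ∂(volume.restrict (Set.uIoc (0:ℝ) s)),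
          ‖K t * Ωseq j t‖ ≤ M ^ (j+1) / j.factorial * t ^ j := by
        rw [ae_restrict_iff' measurableSet_uIoc]
        refine Filter.Eventually.of_forall fun t ht => ?_
        rw [Set.uIoc_of_le h0, Set.mem_Ioc] at ht
        calc ‖K t * Ωseq j t‖ ≤ ‖K t‖ * ‖Ωseq j t‖ := norm_mul_le _ _
        _ ≤ M * (M ^ j * t ^ j / j.factorial) :=
            mul_le_mul (hM t) (ih t ht.1.le (ht.2.trans h1)) (norm_nonneg _) hM0
        _ = M ^ (j+1) / j.factorial * t ^ j := by ring
      have hle := _root_.intervalIntegral.norm_integral_le_abs_of_norm_le hb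
        ((continuous_const.mul (continuous_pow j)).intervalIntegrable 0 s)
      refine hle.trans (le_of_eq ?_)
      rw [_root_.intervalIntegral.integral_const_mul, integral_pow,
        Nat.factorial_succ]
      push_cast
      rw [zero_pow (Nat.succ_ne_zero j), sub_zero,
        abs_of_nonneg (by positivity), div_mul_div_comm,
        mul_comm ((j.factorial : ℝ)) ((j : ℝ) + 1)]
  -- global uniform bound
  have hub : ∀ j (s : ℝ), ‖Ωseq j s‖ ≤ M ^ j / j.factorial := by
    intro j s
    match j with
    | 0 => simpa [hΩ0, ContinuousLinearMap.one_def] using ContinuousLinearMap.norm_id_le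
    | (j+1) =>
      rcases le_or_gt s 0 with hs | hs
      · rw [hzero j s hs]; simp; positivity
      rcases le_or_gt s 1 with hs1 | hs1
      · refine (hfac (j+1) s hs.le hs1).trans ?_
        have hsle : s ^ (j+1) ≤ 1 := pow_le_one₀ hs.le hs1
        calc M ^ (j+1) * s ^ (j+1) / ((j+1).factorial : ℝ)
            ≤ M ^ (j+1) * 1 / ((j+1).factorial : ℝ) := by gcongr
        _ = M ^ (j+1) / ((j+1).factorial : ℝ) := by ring
      · rw [hconst1 j s hs1.le]
        refine (hfac (j+1) 1 zero_le_one le_rfl).trans (le_of_eq ?_)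
        simp
  
  have hsumm : Summable (fun j => M ^ j / (j.factorial : ℝ)) :=
    Real.summable_pow_div_factorial M
  -- Lipschitz bound for Ω
  set L : ℝ := ∑' j : ℕ, M * (M ^ j / (j.factorial : ℝ)) with hL
  have hsumm' : Summable (fun j : ℕ => M * (M ^ j / (j.factorial : ℝ))) := hsumm.mul_left M
  have hL0 : 0 ≤ L := tsum_nonneg fun j => by positivity
  have hlip : ∀ s s' : ℝ, ‖Ω s - Ω s'‖ ≤ L * |s - s'| := by
    intro s s'
    have hD : HasSum (fun j => Ωseq (j+1) s - Ωseq (j+1) s') (Ω s - Ω s') := by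
      refine (hasSum_nat_add_iff (f := fun j => Ωseq j s - Ωseq j s') 1).mpr ?_
      simpa [hΩ0] using (hΩ s).sub (hΩ s')
    have hDb : ∀ j : ℕ, ‖Ωseq (j+1) s - Ωseq (j+1) s'‖ ≤ M * (M ^ j / j.factorial) * |s - s'| := by
      intro j
      rw [hΩsucc j s, hΩsucc j s',
        _root_.intervalIntegral.integral_interval_sub_left (f := fun t => K t * Ωseq j t)
          ((hKcont.mul (hcont j)).intervalIntegrable 0 s)
          ((hKcont.mul (hcont j)).intervalIntegrable 0 s')]
      exact _root_.intervalIntegral.norm_integral_le_of_norm_le_const fun t _ =>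
        le_trans (norm_mul_le _ _) (mul_le_mul (hM t) (hub j t) (norm_nonneg _) hM0)
    have hsummD : Summable (fun j : ℕ => ‖Ωseq (j+1) s - Ωseq (j+1) s'‖) :=
      Summable.of_nonneg_of_le (fun j => norm_nonneg _) hDb (hsumm'.mul_right _)
    calc ‖Ω s - Ω s'‖ = ‖∑' j : ℕ, (Ωseq (j+1) s - Ωseq (j+1) s')‖ := by rw [hD.tsum_eq]
    _ ≤ ∑' j : ℕ, ‖Ωseq (j+1) s - Ωseq (j+1) s'‖ := norm_tsum_le_tsum_norm hsummD
    _ ≤ ∑' j : ℕ, M * (M ^ j / j.factorial) * |s - s'| :=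
        Summable.tsum_le_tsum hDb hsummD (hsumm'.mul_right _)
    _ = L * |s - s'| := by rw [tsum_mul_right]
  have hΩcont : Continuous Ω := by
    have : LipschitzWith (Real.toNNReal L) Ω := by
      apply LipschitzWith.of_dist_le_mul
      intro x y
      rw [dist_eq_norm, Real.coe_toNNReal _ hL0, Real.dist_eq]
      exact hlip x y
    exact this.continuous
  have hKΩcont : Continuous fun t => K t * Ω t := hKcont.mul hΩcont
  -- the integral equation for Ω
  have hΩeq : ∀ τ : ℝ, Ω τ = 1 + ∫ t in (0:ℝ)..τ, K t * Ω t := by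
    intro τ
    have hswap : HasSum (fun j => ∫ t in (0:ℝ)..τ, K t * Ωseq j t)
        (∫ t in (0:ℝ)..τ, K t * Ω t) := by
      apply _root_.intervalIntegral.hasSum_integral_of_dominated_convergence
        (bound := fun j _ => M * (M ^ j / j.factorial))
      · exact fun n => (hKcont.mul (hcont n)).aestronglyMeasurable
      · intro n
        refine Filter.Eventually.of_forall fun t _ => ?_
        exact le_trans (norm_mul_le _ _) (mul_le_mul (hM t) (hub n t) (norm_nonneg _) hM0)
      · exact Filter.Eventually.of_forall fun t _ => hsumm'
      · exact continuous_const.intervalIntegrable 0 τ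
      · exact Filter.Eventually.of_forall fun t _ => (hΩ t).mul_left (K t)
    have hsh : HasSum (fun j => Ωseq (j+1) τ) (Ω τ - 1) := by
      refine (hasSum_nat_add_iff (f := fun j => Ωseq j τ) 1).mpr ?_
      simpa [hΩ0] using hΩ τ
    have heq : (∫ t in (0:ℝ)..τ, K t * Ω t) = Ω τ - 1 := by
      refine HasSum.unique ?_ hsh
      have : (fun j => ∫ t in (0:ℝ)..τ, K t * Ωseq j t) = fun j => Ωseq (j+1) τ :=
        funext fun j => (hΩsucc j τ).symm
      rw [← this]
      exact hswap
    rw [heq]; abel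
  -- derivatives
  have hderivΩ : ∀ τ : ℝ, HasDerivAt Ω (K τ * Ω τ) τ := by
    intro τ
    have h1 : HasDerivAt (fun u => ∫ t in (0:ℝ)..u, K t * Ω t) (K τ * Ω τ) τ :=
      _root_.intervalIntegral.integral_hasDerivAt_right (hKΩcont.intervalIntegrable 0 τ)
        hKΩcont.aestronglyMeasurable.stronglyMeasurableAtFilter hKΩcont.continuousAt
    have h2 : HasDerivAt (fun u => 1 + ∫ t in (0:ℝ)..u, K t * Ω t) (K τ * Ω τ) τ := by
      simpa using h1
    exact h2.congr_of_eventuallyEq (Filter.Eventually.of_forall hΩeq)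
  have hderivseq : ∀ j (τ : ℝ), HasDerivAt (Ωseq (j+1)) (K τ * Ωseq j τ) τ := by
    intro j τ
    have hc : Continuous fun t => K t * Ωseq j t := hKcont.mul (hcont j)
    have h1 : HasDerivAt (fun u => ∫ t in (0:ℝ)..u, K t * Ωseq j t) (K τ * Ωseq j τ) τ :=
      _root_.intervalIntegral.integral_hasDerivAt_right (hc.intervalIntegrable 0 τ)
        hc.aestronglyMeasurable.stronglyMeasurableAtFilter hc.continuousAt
    exact h1.congr_of_eventuallyEq (Filter.Eventually.of_forall (hΩsucc j))
  
  -- norm of Ω is ≤ 1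
  have hΩnorm : ∀ t : ℝ, ‖Ω t‖ ≤ 1 := by
    intro t
    refine ContinuousLinearMap.opNorm_le_bound _ zero_le_one fun x => ?_
    have h4 : adjoint (Ω t) ((Ω t) x) = x := by
      have := congrArg (fun T : H →L[ℂ] H => T x) (hΩunit t).2
      simpa [ContinuousLinearMap.mul_apply] using this
    have h3 : (inner ℂ ((Ω t) x) ((Ω t) x) : ℂ) = inner ℂ x x := by
      have h5 := ContinuousLinearMap.adjoint_inner_left (Ω t) x ((Ω t) x)
      rw [h4] at h5
      exact h5.symm
    have h6 : ‖(Ω t) x‖ ^ 2 = ‖x‖ ^ 2 := by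
      rw [inner_self_eq_norm_sq_to_K, inner_self_eq_norm_sq_to_K] at h3
      exact_mod_cast h3
    have h7 : ‖(Ω t) x‖ = ‖x‖ := by
      have := congrArg Real.sqrt h6
      rwa [Real.sqrt_sq (norm_nonneg _), Real.sqrt_sq (norm_nonneg _)] at this
    rw [h7, one_mul]
  have hQadj : ∀ t : ℝ, ‖adjoint (1 - Ω t)‖ ≤ f := by
    intro t
    rw [LinearIsometryEquiv.norm_map]
    exact hf t
  -- main estimate on [0,1]
  have key : ∀ s : ℝ, 0 ≤ s → s ≤ 1 → ‖Ωseq (i + 2) s‖ ≤ 2 * f * (M + 1) * max A B := by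
    intro s h0 h1
    have hu : ∀ x ∈ Set.uIcc (0:ℝ) s, HasDerivAt Ω (K x * Ω x) x := fun x _ => hderivΩ x
    have hv : ∀ x ∈ Set.uIcc (0:ℝ) s, HasDerivAt (Ωseq (i+1)) (K x * Ωseq i x) x :=
      fun x _ => hderivseq i x
    have hintu : IntervalIntegrable (fun x => K x * Ω x) volume 0 s :=
      hKΩcont.intervalIntegrable 0 s
    have hintv : IntervalIntegrable (fun x => K x * Ωseq i x) volume 0 s :=
      (hKcont.mul (hcont i)).intervalIntegrable 0 s
    have hibp := _root_.intervalIntegral.integral_deriv_mul_eq_sub hu hv hintu hintv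
    have hv10 : Ωseq (i+1) 0 = 0 := by
      rw [hΩsucc, _root_.intervalIntegral.integral_same]
    have hc1 : Continuous fun x => (K x * Ω x) * Ωseq (i+1) x := hKΩcont.mul (hcont (i+1))
    have hc2 : Continuous fun x => Ω x * (K x * Ωseq i x) := hΩcont.mul (hKcont.mul (hcont i))
    have hcQ : Continuous fun x => (1 : H →L[ℂ] H) - Ω x := continuous_const.sub hΩcont
    have hcQa : Continuous fun x => adjoint ((1 : H →L[ℂ] H) - Ω x) :=
      (ContinuousLinearMap.adjoint : (H →L[ℂ] H) ≃ₗᵢ⋆[ℂ] (H →L[ℂ] H)).continuous.comp hcQ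
    have hc3 : Continuous fun x => (K x * Ω x) * (adjoint (1 - Ω x) * Ωseq (i+1) x) :=
      hKΩcont.mul (hcQa.mul (hcont (i+1)))
    have hc4 : Continuous fun x => (1 - Ω x) * (K x * Ωseq i x) := hcQ.mul (hKcont.mul (hcont i))
    have hsplit : (∫ x in (0:ℝ)..s, (K x * Ω x) * Ωseq (i+1) x)
        + (∫ x in (0:ℝ)..s, Ω x * (K x * Ωseq i x)) = Ω s * Ωseq (i+1) s := by
      rw [← _root_.intervalIntegral.integral_add (hc1.intervalIntegrable 0 s)
        (hc2.intervalIntegrable 0 s), hibp, hv10, mul_zero, sub_zero]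
    -- pointwise identity
    have hpt : ∀ x : ℝ, K x * Ωseq (i+1) x
        = (K x * Ω x) * Ωseq (i+1) x - (K x * Ω x) * (adjoint (1 - Ω x) * Ωseq (i+1) x) := by
      intro x
      have hadj : adjoint ((1:H →L[ℂ] H) - Ω x) = 1 - adjoint (Ω x) := by
        rw [map_sub]
        congr 1
        rw [ContinuousLinearMap.one_def, adjoint_id]
      rw [hadj]
      have hx := (hΩunit x).1
      calc K x * Ωseq (i+1) x = K x * ((Ω x * adjoint (Ω x)) * Ωseq (i+1) x) := by
            rw [hx, one_mul]
      _ = (K x * Ω x) * Ωseq (i+1) x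
            - (K x * Ω x) * ((1 - adjoint (Ω x)) * Ωseq (i+1) x) := by noncomm_ring
    have hrepr : Ωseq (i + 2) s
        = (∫ x in (0:ℝ)..s, (1 - Ω x) * (K x * Ωseq i x))
          - (∫ x in (0:ℝ)..s, (K x * Ω x) * (adjoint (1 - Ω x) * Ωseq (i+1) x))
          - (1 - Ω s) * Ωseq (i+1) s := by
      have e1 : Ωseq (i + 2) s = ∫ x in (0:ℝ)..s, K x * Ωseq (i+1) x := hΩsucc (i+1) s
      have e2 : (∫ x in (0:ℝ)..s, K x * Ωseq (i+1) x)
          = (∫ x in (0:ℝ)..s, (K x * Ω x) * Ωseq (i+1) x)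
            - (∫ x in (0:ℝ)..s, (K x * Ω x) * (adjoint (1 - Ω x) * Ωseq (i+1) x)) := by
        rw [← _root_.intervalIntegral.integral_sub (hc1.intervalIntegrable 0 s)
          (hc3.intervalIntegrable 0 s)]
        exact _root_.intervalIntegral.integral_congr fun x _ => hpt x
      have e3 : (∫ x in (0:ℝ)..s, Ω x * (K x * Ωseq i x))
          = (∫ x in (0:ℝ)..s, K x * Ωseq i x)
            - (∫ x in (0:ℝ)..s, (1 - Ω x) * (K x * Ωseq i x)) := by
        rw [← _root_.intervalIntegral.integral_sub (hintv) (hc4.intervalIntegrable 0 s)]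
        refine _root_.intervalIntegral.integral_congr fun x _ => ?_
        noncomm_ring
      have e4 : (∫ x in (0:ℝ)..s, K x * Ωseq i x) = Ωseq (i+1) s := (hΩsucc i s).symm
      have e5 : (∫ x in (0:ℝ)..s, (K x * Ω x) * Ωseq (i+1) x)
          = Ω s * Ωseq (i+1) s - (∫ x in (0:ℝ)..s, Ω x * (K x * Ωseq i x)) := by
        rw [← hsplit]; abel
      rw [e1, e2, e5, e3, e4]
      have : Ω s * Ωseq (i+1) s = Ωseq (i+1) s - (1 - Ω s) * Ωseq (i+1) s := by noncomm_ring
      rw [this]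
      abel
    have habs : |s - (0:ℝ)| ≤ 1 := by rw [sub_zero, abs_of_nonneg h0]; exact h1
    have hb1 : ‖∫ x in (0:ℝ)..s, (1 - Ω x) * (K x * Ωseq i x)‖ ≤ f * (M * A) * |s - 0| := by
      refine _root_.intervalIntegral.norm_integral_le_of_norm_le_const fun x _ => ?_
      calc ‖(1 - Ω x) * (K x * Ωseq i x)‖ ≤ ‖(1:H →L[ℂ] H) - Ω x‖ * ‖K x * Ωseq i x‖ :=
            norm_mul_le _ _
      _ ≤ f * (M * A) := by
          refine mul_le_mul (hf x) (le_trans (norm_mul_le _ _) ?_) (norm_nonneg _) hf0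
          exact mul_le_mul (hM x) (hA x) (norm_nonneg _) hM0
    have hb3 : ‖∫ x in (0:ℝ)..s, (K x * Ω x) * (adjoint (1 - Ω x) * Ωseq (i+1) x)‖
        ≤ M * (f * B) * |s - 0| := by
      refine _root_.intervalIntegral.norm_integral_le_of_norm_le_const fun x _ => ?_
      calc ‖(K x * Ω x) * (adjoint (1 - Ω x) * Ωseq (i+1) x)‖
          ≤ ‖K x * Ω x‖ * ‖adjoint (1 - Ω x) * Ωseq (i+1) x‖ := norm_mul_le _ _
      _ ≤ M * (f * B) := by
          refine mul_le_mul (le_trans (norm_mul_le _ _) ?_) (le_trans (norm_mul_le _ _) ?_)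
            (norm_nonneg _) hM0
          · calc ‖K x‖ * ‖Ω x‖ ≤ M * 1 :=
                mul_le_mul (hM x) (hΩnorm x) (norm_nonneg _) hM0
            _ = M := mul_one M
          · exact mul_le_mul (hQadj x) (hB x) (norm_nonneg _) hf0
    have hbQ : ‖(1 - Ω s) * Ωseq (i+1) s‖ ≤ f * B :=
      le_trans (norm_mul_le _ _) (mul_le_mul (hf s) (hB s) (norm_nonneg _) hf0)
    rw [hrepr]
    have hmA : A ≤ max A B := le_max_left A B
    have hmB : B ≤ max A B := le_max_right A B
    have hm0 : 0 ≤ max A B := le_trans hA0 hmA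
    calc ‖(∫ x in (0:ℝ)..s, (1 - Ω x) * (K x * Ωseq i x))
          - (∫ x in (0:ℝ)..s, (K x * Ω x) * (adjoint (1 - Ω x) * Ωseq (i+1) x))
          - (1 - Ω s) * Ωseq (i+1) s‖
        ≤ ‖(∫ x in (0:ℝ)..s, (1 - Ω x) * (K x * Ωseq i x))
          - (∫ x in (0:ℝ)..s, (K x * Ω x) * (adjoint (1 - Ω x) * Ωseq (i+1) x))‖
          + ‖(1 - Ω s) * Ωseq (i+1) s‖ := norm_sub_le _ _
    _ ≤ ‖(∫ x in (0:ℝ)..s, (1 - Ω x) * (K x * Ωseq i x))‖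
          + ‖(∫ x in (0:ℝ)..s, (K x * Ω x) * (adjoint (1 - Ω x) * Ωseq (i+1) x))‖
          + ‖(1 - Ω s) * Ωseq (i+1) s‖ := add_le_add_left (norm_sub_le _ _) _
    _ ≤ f * (M * A) * |s - 0| + M * (f * B) * |s - 0| + f * B :=
        add_le_add (add_le_add hb1 hb3) hbQ
    _ ≤ f * (M * A) + M * (f * B) + f * B := by
        have u1 : f * (M * A) * |s - 0| ≤ f * (M * A) * 1 := by
          refine mul_le_mul_of_nonneg_left habs (by positivity)
        have u2 : M * (f * B) * |s - 0| ≤ M * (f * B) * 1 := by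
          refine mul_le_mul_of_nonneg_left habs (by positivity)
        nlinarith
    _ ≤ 2 * f * (M + 1) * max A B := by
        have w1 : f * (M * A) ≤ f * M * max A B := by
          rw [← mul_assoc]; exact mul_le_mul_of_nonneg_left hmA (by positivity)
        have w2 : M * (f * B) ≤ f * M * max A B := by
          rw [show M * (f * B) = f * M * B by ring]
          exact mul_le_mul_of_nonneg_left hmB (by positivity)
        have w3 : f * B ≤ f * max A B := mul_le_mul_of_nonneg_left hmB hf0
        nlinarith [mul_nonneg (mul_nonneg hf0 hM0) hm0, mul_nonneg hf0 hm0]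
  -- final case analysis
  intro s
  have hrhs : 0 ≤ 2 * f * (M + 1) * max A B := by
    have : (0:ℝ) ≤ max A B := le_trans hA0 (le_max_left A B)
    have hM1 : (0:ℝ) ≤ M + 1 := by linarith
    positivity
  rcases le_or_gt s 0 with hs | hs
  · have h := hzero (i+1) s hs
    rw [show i + 1 + 1 = i + 2 from rfl] at h
    rw [h, norm_zero]
    exact hrhs
  rcases le_or_gt s 1 with hs1 | hs1
  · exact key s hs.le hs1
  · have h := hconst1 (i+1) s hs1.le
    rw [show i + 1 + 1 = i + 2 from rfl] at h
    rw [h]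
    exact key 1 zero_le_one le_rfl
end

section
/- Let μ be a positive Borel measure on [0,∞), φ ∈ L²(μ) with ∫_0^x |φ(k)|² dμ(k) ≤ C x^{2β} for all x > 0 (some C > 0, β > 0), and g ∈ C_c^∞(ℝ) with ĝ'(p) = ∫ g'(s) e^{ips} ds decaying faster than any polynomial. Then for every ε > 0 there is C₁ such that for all large τ, ∫_0^∞ |ĝ'(τ k)|² |φ(k)|² dμ(k) ≤ C₁ τ^{−2β + ε}. -/
open MeasureTheory Filter Complex

/-- Upper bound in the Friedrichs model: if `∫_0^x |φ|² dμ ≤ C x^{2β}` for all `x > 0`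
and `ĝ'` decays faster than any polynomial, then for every `ε > 0` there is `C₁` with
`∫ |ĝ'(τk)|² |φ(k)|² dμ(k) ≤ C₁ τ^{−2β+ε}` for large `τ`. -/
theorem stmt8 (μ : Measure ℝ) (φ : ℝ → ℂ) (hφ : MemLp φ 2 μ)
    (β : ℝ) (hβ : 0 < β) (C : ℝ) (hC : 0 < C)
    (hup : ∀ x > (0:ℝ), ∫ k in Set.Icc 0 x, ‖φ k‖ ^ 2 ∂μ ≤ C * x ^ (2 * β))
    (ghat : ℝ → ℂ)
    (hdecay : ∀ N : ℕ, ∃ C_N : ℝ, ∀ p : ℝ, ‖ghat p‖ * (1 + |p|) ^ N ≤ C_N) :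
    ∀ ε > (0:ℝ), ∃ C₁ : ℝ, ∀ᶠ τ : ℝ in atTop,
      ∫ k in Set.Ici (0:ℝ), ‖ghat (τ * k)‖ ^ 2 * ‖φ k‖ ^ 2 ∂μ
        ≤ C₁ * τ ^ (-(2 * β) + ε) := by
  intro ε hε
  set ε' : ℝ := ε / (2 * β) with hε'def
  have hε'pos : 0 < ε' := div_pos hε (by positivity)
  obtain ⟨C₀, hC₀⟩ := hdecay 0
  have hC₀' : ∀ p : ℝ, ‖ghat p‖ ≤ C₀ := by
    intro p; simpa using hC₀ p
  have hC₀0 : 0 ≤ C₀ := le_trans (norm_nonneg _) (hC₀' 0)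
  obtain ⟨N, hN⟩ : ∃ N : ℕ, β ≤ N * ε' := by
    obtain ⟨N, hN⟩ := exists_nat_ge (β / ε')
    exact ⟨N, by rwa [div_le_iff₀ hε'pos] at hN⟩
  obtain ⟨CN, hCN⟩ := hdecay N
  have hCN0 : 0 ≤ CN := le_trans (by positivity) (hCN 0)
  have hφ2 : Integrable (fun k => ‖φ k‖ ^ 2) μ := by
    have := hφ.integrable_norm_rpow two_ne_zero ENNReal.ofNat_ne_top
    simpa [ENNReal.toReal_ofNat, Real.rpow_natCast] using this
  set M : ℝ := ∫ k, ‖φ k‖ ^ 2 ∂μ with hMdef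
  have hM : 0 ≤ M := integral_nonneg (fun k => by positivity)
  refine ⟨C₀ ^ 2 * C + CN ^ 2 * M, ?_⟩
  filter_upwards [eventually_ge_atTop 1] with τ hτ
  have hτ0 : (0:ℝ) < τ := lt_of_lt_of_le one_pos hτ
  have hrpow_nonneg : (0:ℝ) ≤ τ ^ (-(2 * β) + ε) := (Real.rpow_pos_of_pos hτ0 _).le
  have hC₁0 : (0:ℝ) ≤ C₀ ^ 2 * C + CN ^ 2 * M := by positivity
  set x : ℝ := τ ^ (ε' - 1) with hxdef
  have hx0 : 0 < x := Real.rpow_pos_of_pos hτ0 _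
  have hxpow : x ^ (2 * β) = τ ^ (-(2 * β) + ε) := by
    rw [hxdef, ← Real.rpow_mul hτ0.le]
    congr 1
    field_simp [hε'def]
    have h2 : ε' * (2 * β) = ε := by rw [hε'def]; exact div_mul_cancel₀ ε (by positivity)
    linarith
  have hτx : τ * x = τ ^ ε' := by
    have h1 : ε' = 1 + (ε' - 1) := by ring
    rw [h1, Real.rpow_add hτ0, Real.rpow_one, hxdef]
  -- pointwise bound on the tail
  have htail : ∀ k ∈ Set.Ioi x, ‖ghat (τ * k)‖ ^ 2 * ‖φ k‖ ^ 2
      ≤ (CN ^ 2 * τ ^ (-(2 * β) + ε)) * ‖φ k‖ ^ 2 := by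
    intro k hk
    have hk' : x < k := hk
    have hkx : τ ^ ε' ≤ 1 + |τ * k| := by
      rw [← hτx]
      have h1 : 0 < τ * k := mul_pos hτ0 (hx0.trans hk')
      rw [abs_of_pos h1]
      nlinarith
    have hgb : ‖ghat (τ * k)‖ * (τ ^ ε') ^ N ≤ CN :=
      le_trans (mul_le_mul_of_nonneg_left
        (pow_le_pow_left₀ (Real.rpow_pos_of_pos hτ0 _).le hkx N) (norm_nonneg _)) (hCN (τ * k))
    have hpowpos : (0:ℝ) < (τ ^ ε') ^ N := by positivity
    have hg1 : ‖ghat (τ * k)‖ ≤ CN / (τ ^ ε') ^ N := by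
      rw [le_div_iff₀ hpowpos]; exact hgb
    have hg2 : ‖ghat (τ * k)‖ ^ 2 ≤ (CN / (τ ^ ε') ^ N) ^ 2 :=
      pow_le_pow_left₀ (norm_nonneg _) hg1 2
    have hkey : (CN / (τ ^ ε') ^ N) ^ 2 ≤ CN ^ 2 * τ ^ (-(2 * β) + ε) := by
      rw [div_pow]
      rw [div_le_iff₀ (by positivity)]
      have h3 : ((τ ^ ε') ^ N) ^ 2 = τ ^ ((2 * N) * ε') := by
        rw [← Real.rpow_natCast (τ ^ ε') N, ← Real.rpow_mul hτ0.le, ← Real.rpow_natCast _ 2,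
          ← Real.rpow_mul hτ0.le]
        congr 1; push_cast; ring
      have h4 : (1:ℝ) ≤ τ ^ ((2 * N) * ε' + (-(2 * β) + ε)) := by
        apply Real.one_le_rpow hτ
        have : 2 * β ≤ 2 * N * ε' := by nlinarith
        nlinarith [hε.le]
      calc CN ^ 2 = CN ^ 2 * 1 := by ring
        _ ≤ CN ^ 2 * τ ^ ((2 * N) * ε' + (-(2 * β) + ε)) :=
            mul_le_mul_of_nonneg_left h4 (by positivity)
        _ = CN ^ 2 * τ ^ (-(2 * β) + ε) * τ ^ ((2 * N) * ε') := by
            rw [Real.rpow_add hτ0]; ring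
        _ = CN ^ 2 * τ ^ (-(2 * β) + ε) * ((τ ^ ε') ^ N) ^ 2 := by rw [h3]
    exact mul_le_mul_of_nonneg_right (hg2.trans hkey) (by positivity)
  by_cases hint : IntegrableOn (fun k => ‖ghat (τ * k)‖ ^ 2 * ‖φ k‖ ^ 2) (Set.Ici 0) μ
  · have hsplit : Set.Icc (0:ℝ) x ∪ Set.Ioi x = Set.Ici 0 := Set.Icc_union_Ioi_eq_Ici hx0.le
    have hint1 : IntegrableOn (fun k => ‖ghat (τ * k)‖ ^ 2 * ‖φ k‖ ^ 2) (Set.Icc 0 x) μ :=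
      hint.mono_set (by rw [← hsplit]; exact Set.subset_union_left)
    have hint2 : IntegrableOn (fun k => ‖ghat (τ * k)‖ ^ 2 * ‖φ k‖ ^ 2) (Set.Ioi x) μ :=
      hint.mono_set (by rw [← hsplit]; exact Set.subset_union_right)
    have hdisj : Disjoint (Set.Icc (0:ℝ) x) (Set.Ioi x) :=
      Set.disjoint_left.2 (fun k hk hk' => absurd hk.2 (not_le.2 hk'))
    have heq : ∫ k in Set.Ici (0:ℝ), ‖ghat (τ * k)‖ ^ 2 * ‖φ k‖ ^ 2 ∂μ
        = (∫ k in Set.Icc (0:ℝ) x, ‖ghat (τ * k)‖ ^ 2 * ‖φ k‖ ^ 2 ∂μ)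
          + ∫ k in Set.Ioi x, ‖ghat (τ * k)‖ ^ 2 * ‖φ k‖ ^ 2 ∂μ := by
      rw [← hsplit, setIntegral_union hdisj measurableSet_Ioi hint1 hint2]
    rw [heq]
    have hpart1 : ∫ k in Set.Icc (0:ℝ) x, ‖ghat (τ * k)‖ ^ 2 * ‖φ k‖ ^ 2 ∂μ
        ≤ C₀ ^ 2 * C * τ ^ (-(2 * β) + ε) := by
      have hb : ∫ k in Set.Icc (0:ℝ) x, ‖ghat (τ * k)‖ ^ 2 * ‖φ k‖ ^ 2 ∂μ
          ≤ ∫ k in Set.Icc (0:ℝ) x, C₀ ^ 2 * ‖φ k‖ ^ 2 ∂μ := by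
        refine setIntegral_mono_on hint1 ((hφ2.integrableOn).const_mul _) measurableSet_Icc ?_
        intro k _
        exact mul_le_mul_of_nonneg_right
          (pow_le_pow_left₀ (norm_nonneg _) (hC₀' (τ * k)) 2) (by positivity)
      refine hb.trans ?_
      rw [integral_const_mul]
      calc C₀ ^ 2 * ∫ k in Set.Icc (0:ℝ) x, ‖φ k‖ ^ 2 ∂μ
          ≤ C₀ ^ 2 * (C * x ^ (2 * β)) :=
            mul_le_mul_of_nonneg_left (hup x hx0) (by positivity)
        _ = C₀ ^ 2 * C * τ ^ (-(2 * β) + ε) := by rw [hxpow]; ring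
    have hpart2 : ∫ k in Set.Ioi x, ‖ghat (τ * k)‖ ^ 2 * ‖φ k‖ ^ 2 ∂μ
        ≤ CN ^ 2 * M * τ ^ (-(2 * β) + ε) := by
      have hb : ∫ k in Set.Ioi x, ‖ghat (τ * k)‖ ^ 2 * ‖φ k‖ ^ 2 ∂μ
          ≤ ∫ k in Set.Ioi x, (CN ^ 2 * τ ^ (-(2 * β) + ε)) * ‖φ k‖ ^ 2 ∂μ := by
        refine setIntegral_mono_on hint2 ((hφ2.integrableOn).const_mul _) measurableSet_Ioi htail
      refine hb.trans ?_
      rw [integral_const_mul]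
      have hM2 : ∫ k in Set.Ioi x, ‖φ k‖ ^ 2 ∂μ ≤ M := by
        refine setIntegral_le_integral hφ2 ?_
        filter_upwards with k using by positivity
      calc (CN ^ 2 * τ ^ (-(2 * β) + ε)) * ∫ k in Set.Ioi x, ‖φ k‖ ^ 2 ∂μ
          ≤ (CN ^ 2 * τ ^ (-(2 * β) + ε)) * M :=
            mul_le_mul_of_nonneg_left hM2 (by positivity)
        _ = CN ^ 2 * M * τ ^ (-(2 * β) + ε) := by ring
    calc _ ≤ C₀ ^ 2 * C * τ ^ (-(2 * β) + ε) + CN ^ 2 * M * τ ^ (-(2 * β) + ε) :=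
          add_le_add hpart1 hpart2
      _ = (C₀ ^ 2 * C + CN ^ 2 * M) * τ ^ (-(2 * β) + ε) := by ring
  · rw [integral_undef hint]
    exact mul_nonneg hC₁0 hrpow_nonneg
end
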